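/- A word w = x₁^{ε₁}⋯x_n^{ε_n} over a basis X represents a quasi-positive element of the free group F(X) if and only if there exists a regular bracket structure of length n which agrees with w. -/
import Mathlib



/-- Quasi-positive: a (possibly empty) product of conjugates of generators. -/
def QuasiPositive {X : Type*} (w : FreeGroup X) : Prop :=
  ∃ l : List (X × FreeGroup X),
    w = (l.map fun p => p.2⁻¹ * FreeGroup.of p.1 * p.2).prod

/-- The alphabet `{[, *, ]}` of regular bracket structures. -/
inductive BSym
  | lbrack
  | star
  | rbrack
deriving DecidableEq

/-- `Agrees u w` means `u` is a regular bracket structure agreeing with the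
word `w` over `X ∪ X⁻¹` (a letter is a pair `(x, ε)` with `ε : Bool`):
stars match positive letters, and matching brackets (arising from the rule
`a ↦ [a]`) match pairs of inverse letters. -/
inductive Agrees {X : Type*} : List BSym → List (X × Bool) → Prop
  | nil : Agrees [] []
  | star (x : X) : Agrees [BSym.star] [(x, true)]
  | brack {u w} (x : X) (ε : Bool) (h : Agrees u w) :
      Agrees ([BSym.lbrack] ++ u ++ [BSym.rbrack]) ([(x, ε)] ++ w ++ [(x, !ε)])
  | append {u₁ w₁ u₂ w₂} (h₁ : Agrees u₁ w₁) (h₂ : Agrees u₂ w₂) :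
      Agrees (u₁ ++ u₂) (w₁ ++ w₂)



namespace OrevkovAux

variable {X : Type*}

/-- Words over `X ∪ X⁻¹` admitting a regular bracket structure (cons-style). -/
inductive RBS : List (X × Bool) → Prop
  | nil : RBS []
  | star (x : X) {w} : RBS w → RBS ((x, true) :: w)
  | brack (x : X) (ε : Bool) {v w} : RBS v → RBS w →
      RBS ((x, ε) :: (v ++ (x, !ε) :: w))

lemma RBS.append : ∀ {w₁ w₂ : List (X × Bool)}, RBS w₁ → RBS w₂ → RBS (w₁ ++ w₂) := by
  intro w₁ w₂ h₁ h₂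
  induction h₁ with
  | nil => exact h₂
  | star x h ih => exact .star x ih
  | @brack x ε v w hv hw ihv ihw =>
      have := RBS.brack x ε hv ihw
      simpa using this

lemma RBS.reverse : ∀ {w : List (X × Bool)}, RBS w → RBS w.reverse := by
  intro w h
  induction h with
  | nil => exact .nil
  | star x h ih => simpa using ih.append (RBS.star x RBS.nil)
  | @brack x ε v w hv hw ihv ihw =>
      have inner : RBS ((x, !ε) :: (v.reverse ++ (x, ε) :: ([] : List (X × Bool)))) := by
        have := RBS.brack x (!ε) ihv RBS.nil
        simpa using this
      have := ihw.append inner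
      simpa [List.reverse_cons, List.reverse_append] using this

/-- Rotate the first letter to the end. -/
lemma RBS.rotate {x : X} {ε : Bool} {v : List (X × Bool)}
    (h : RBS ((x, ε) :: v)) : RBS (v ++ [(x, ε)]) := by
  cases h with
  | star _ h => exact h.append (RBS.star x RBS.nil)
  | @brack _ _ m r hm hr =>
      have inner : RBS ((x, !ε) :: (r ++ (x, ε) :: ([] : List (X × Bool)))) := by
        have := RBS.brack x (!ε) hr RBS.nil
        simpa using this
      have := hm.append inner
      simpa using this

/-- Rotate the last letter to the front. -/
lemma RBS.rotate' {x : X} {ε : Bool} {v : List (X × Bool)}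
    (h : RBS (v ++ [(x, ε)])) : RBS ((x, ε) :: v) := by
  have h1 : RBS ((x, ε) :: v.reverse) := by
    have := h.reverse
    simpa using this
  have h2 : RBS (v.reverse ++ [(x, ε)]) := h1.rotate
  have := h2.reverse
  simpa using this

end OrevkovAux

namespace OrevkovAux

variable {X : Type*}

lemma RBS.pair (x : X) (ε : Bool) : RBS [(x, ε), (x, !ε)] := by
  simpa using RBS.brack x ε RBS.nil RBS.nil

/-- If `(x,b) :: w` has a bracket structure, we may insert any bracketed word
just after the head letter. -/
lemma RBS.absorb {x : X} {b : Bool} {v w : List (X × Bool)}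
    (hv : RBS v) (h : RBS ((x, b) :: w)) : RBS ((x, b) :: (v ++ w)) := by
  cases h with
  | star _ hw => exact RBS.star x (hv.append hw)
  | @brack _ _ m s hm hs =>
      have := RBS.brack x b (hv.append hm) hs
      simpa using this

/-- Move the head letter past the rest of its own word, inserting a word after. -/
lemma RBS.swap {x : X} {b : Bool} {v w : List (X × Bool)}
    (h : RBS ((x, b) :: v)) (hw : RBS w) : RBS (v ++ (x, b) :: w) := by
  cases h with
  | star _ hv => exact hv.append (RBS.star x hw)
  | @brack _ _ m s hm hs =>
      have := RBS.brack x (!b) hs hw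
      simp only [Bool.not_not] at this
      have := hm.append this
      simpa using this

lemma RBS.unbrack_false {x : X} {w : List (X × Bool)}
    (h : RBS ((x, false) :: w)) : RBS w := by
  cases h with
  | @brack _ _ m s hm hs =>
      have := hm.append (RBS.star x hs)
      simpa using this

/-- Insertion of a cancelling pair preserves `RBS`. -/
lemma RBS.ins : ∀ {W : List (X × Bool)}, RBS W → ∀ (w₁ w₂ : List (X × Bool)) (x : X) (ε : Bool),
    W = w₁ ++ w₂ → RBS (w₁ ++ (x, ε) :: (x, !ε) :: w₂) := by
  intro W h
  induction h with
  | nil =>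
      intro w₁ w₂ x ε hEq
      obtain ⟨rfl, rfl⟩ := List.append_eq_nil_iff.1 hEq.symm
      simpa using RBS.pair x ε
  | @star y w hw ih =>
      intro w₁ w₂ x ε hEq
      cases w₁ with
      | nil =>
          subst hEq
          exact (RBS.pair x ε).append (RBS.star y hw)
      | cons c t =>
          simp only [List.cons_append, List.cons.injEq] at hEq
          obtain ⟨rfl, hEq⟩ := hEq
          exact RBS.star y (ih t w₂ x ε hEq)
  | @brack y δ v r hv hr ihv ihr =>
      intro w₁ w₂ x ε hEq
      cases w₁ with
      | nil =>
          subst hEq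
          exact (RBS.pair x ε).append (RBS.brack y δ hv hr)
      | cons c t =>
          simp only [List.cons_append, List.cons.injEq] at hEq
          obtain ⟨rfl, hEq⟩ := hEq
          rcases List.append_eq_append_iff.1 hEq with ⟨k, hk1, hk2⟩ | ⟨k, hk1, hk2⟩
          · -- t = v ++ k,  (y,!δ)::r = k ++ w₂
            cases k with
            | nil =>
                simp only [List.nil_append] at hk2
                subst hk1
                simp only [List.append_nil]
                rw [← hk2]
                have := RBS.brack y δ (hv.append (RBS.pair x ε)) hr
                simpa using this
            | cons c' k' =>
                simp only [List.cons_append, List.cons.injEq] at hk2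
                obtain ⟨rfl, hk2⟩ := hk2
                subst hk1
                have := RBS.brack y δ hv (ihr k' w₂ x ε hk2)
                simpa using this
          · -- v = t ++ k,  w₂ = k ++ (y,!δ)::r
            subst hk1; subst hk2
            have := RBS.brack y δ (ihv t k x ε rfl) hr
            simpa using this

/-- Deletion of a cancelling pair preserves `RBS`. -/
lemma RBS.del : ∀ {W : List (X × Bool)}, RBS W → ∀ (w₁ w₂ : List (X × Bool)) (x : X) (ε : Bool),
    W = w₁ ++ (x, ε) :: (x, !ε) :: w₂ → RBS (w₁ ++ w₂) := by
  intro W h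
  induction h with
  | nil =>
      intro w₁ w₂ x ε hEq
      exact absurd hEq.symm (by simp)
  | @star y w hw ih =>
      intro w₁ w₂ x ε hEq
      cases w₁ with
      | nil =>
          simp only [List.nil_append, List.cons.injEq, Prod.mk.injEq] at hEq
          obtain ⟨⟨rfl, hε⟩, hEq⟩ := hEq
          subst hEq
          have hε' : ε = true := hε.symm
          subst hε'
          simp only [List.nil_append]
          exact RBS.unbrack_false (by simpa using hw)
      | cons c t =>
          simp only [List.cons_append, List.cons.injEq] at hEq
          obtain ⟨rfl, hEq⟩ := hEq
          exact RBS.star y (ih t w₂ x ε hEq)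
  | @brack y δ v r hv hr ihv ihr =>
      intro w₁ w₂ x ε hEq
      cases w₁ with
      | nil =>
          simp only [List.nil_append, List.cons.injEq, Prod.mk.injEq] at hEq
          obtain ⟨⟨rfl, hδ⟩, hEq⟩ := hEq
          -- hδ : δ = ε,  hEq : v ++ (y,!δ)::r = (y,!ε)::w₂
          subst hδ
          cases v with
          | nil =>
              simp only [List.nil_append, List.cons.injEq] at hEq
              obtain ⟨-, rfl⟩ := hEq
              simpa using hr
          | cons c v' =>
              simp only [List.cons_append, List.cons.injEq] at hEq
              obtain ⟨rfl, hEq⟩ := hEq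
              simp only [List.nil_append]
              rw [← hEq]
              exact RBS.swap hv hr
      | cons c t =>
          simp only [List.cons_append, List.cons.injEq] at hEq
          obtain ⟨rfl, hEq⟩ := hEq
          -- hEq : t ++ (x,ε)::(x,!ε)::w₂ = v ++ (y,!δ)::r
          rcases List.append_eq_append_iff.1 hEq with ⟨k, hk1, hk2⟩ | ⟨k, hk1, hk2⟩
          · -- hk1 : t = v ++ k,  hk2 : (y,!δ)::r = k ++ (x,ε)::(x,!ε)::w₂
            cases k with
            | nil =>
                simp only [List.nil_append, List.cons.injEq, Prod.mk.injEq] at hk2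
                obtain ⟨⟨rfl, hδ⟩, hk2⟩ := hk2
                simp only [List.append_nil] at hk1
                subst hk1
                rw [hk2] at hr
                have hδ' : δ = !ε := by revert hδ; cases δ <;> cases ε <;> decide
                rw [hδ']
                simpa using RBS.absorb hv hr
            | cons c' k' =>
                simp only [List.cons_append, List.cons.injEq] at hk2
                obtain ⟨rfl, hk2⟩ := hk2
                subst hk1
                have := RBS.brack y δ hv (ihr k' w₂ x ε hk2)
                simpa using this
          · -- hk1 : v = t ++ k,  hk2 : (x,ε)::(x,!ε)::w₂ = k ++ (y,!δ)::r
            cases k with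
            | nil =>
                simp only [List.nil_append, List.cons.injEq, Prod.mk.injEq] at hk2
                obtain ⟨⟨rfl, hδ⟩, hk2⟩ := hk2
                simp only [List.append_nil] at hk1
                subst hk1
                rw [← hk2] at hr
                have hδ' : δ = !ε := by revert hδ; cases δ <;> cases ε <;> decide
                rw [hδ']
                simpa using RBS.absorb hv hr
            | cons c' k' =>
                cases k' with
                | nil =>
                    simp only [List.cons_append, List.nil_append, List.cons.injEq,
                      Prod.mk.injEq] at hk2
                    obtain ⟨rfl, ⟨rfl, hδ⟩, rfl⟩ := hk2
                    have hδ' : δ = ε := by revert hδ; cases δ <;> cases ε <;> decide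
                    rw [hδ']
                    subst hk1
                    simpa using (RBS.rotate' hv).append hr
                | cons c'' k'' =>
                    simp only [List.cons_append, List.cons.injEq] at hk2
                    obtain ⟨rfl, rfl, hk2⟩ := hk2
                    subst hk1
                    rw [hk2]
                    have := RBS.brack y δ (ihv t k'' x ε rfl) hr
                    simpa using this

end OrevkovAux

namespace OrevkovAux

variable {X : Type*}

open FreeGroup in
/-- `RBS` is invariant under free reduction. -/
lemma rbs_of_red {w₁ w₂ : List (X × Bool)} (h : FreeGroup.Red w₁ w₂) :
    RBS w₁ ↔ RBS w₂ := by
  induction h with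
  | refl => exact Iff.rfl
  | tail _ step ih =>
      refine ih.trans ?_
      cases step with
      | @not L₁ L₂ z b =>
          exact ⟨fun hb => hb.del L₁ L₂ z b rfl, fun hc => hc.ins L₁ L₂ z b rfl⟩

/-- Conjugating a bracketed word by any word preserves `RBS`. -/
lemma rbs_conj : ∀ (c : List (X × Bool)) {m : List (X × Bool)}, RBS m →
    RBS (FreeGroup.invRev c ++ m ++ c) := by
  intro c
  induction c with
  | nil => intro m hm; simpa [FreeGroup.invRev] using hm
  | cons p c' ih =>
      intro m hm
      have h1 : RBS ((p.1, !p.2) :: (m ++ [(p.1, p.2)])) := by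
        simpa using RBS.brack p.1 (!p.2) hm RBS.nil
      have h2 := ih h1
      have heq : FreeGroup.invRev (p :: c') ++ m ++ p :: c'
          = FreeGroup.invRev c' ++ ((p.1, !p.2) :: (m ++ [(p.1, p.2)])) ++ c' := by
        simp [FreeGroup.invRev]
      rw [heq]
      exact h2

end OrevkovAux

namespace OrevkovAux

variable {X : Type*}

lemma agrees_length {u : List BSym} {w : List (X × Bool)} (h : Agrees u w) :
    u.length = w.length := by
  induction h <;> simp_all

lemma agrees_rbs {u : List BSym} {w : List (X × Bool)} (h : Agrees u w) : RBS w := by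
  induction h with
  | nil => exact .nil
  | star x => exact .star x .nil
  | brack x ε h ih => simpa using RBS.brack x ε ih RBS.nil
  | append h₁ h₂ ih₁ ih₂ => exact ih₁.append ih₂

lemma rbs_agrees {w : List (X × Bool)} (h : RBS w) : ∃ u, Agrees u w := by
  induction h with
  | star x h ih =>
      obtain ⟨u, hu⟩ := ih
      exact ⟨.star :: u, by simpa using Agrees.append (Agrees.star x) hu⟩
  | @brack x ε v w hv hw ihv ihw =>
      obtain ⟨u1, h1⟩ := ihv
      obtain ⟨u2, h2⟩ := ihw
      refine ⟨([.lbrack] ++ u1 ++ [.rbrack]) ++ u2, ?_⟩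
      have := Agrees.append (Agrees.brack x ε h1) h2
      simpa using this
  | nil => exact ⟨[], .nil⟩

lemma qp_one : QuasiPositive (1 : FreeGroup X) := ⟨[], by simp⟩

lemma qp_mul {a b : FreeGroup X} (ha : QuasiPositive a) (hb : QuasiPositive b) :
    QuasiPositive (a * b) := by
  obtain ⟨l₁, rfl⟩ := ha
  obtain ⟨l₂, rfl⟩ := hb
  exact ⟨l₁ ++ l₂, by simp⟩

lemma conj_prod (a : FreeGroup X) : ∀ l : List (X × FreeGroup X),
    ((l.map fun p => (p.1, p.2 * a⁻¹)).map fun p => p.2⁻¹ * FreeGroup.of p.1 * p.2).prod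
      = a * (l.map fun p => p.2⁻¹ * FreeGroup.of p.1 * p.2).prod * a⁻¹
  | [] => by simp
  | p :: l => by
      simp only [List.map_cons, List.prod_cons, conj_prod a l]
      group

lemma qp_conj (a : FreeGroup X) {g : FreeGroup X} (hg : QuasiPositive g) :
    QuasiPositive (a * g * a⁻¹) := by
  obtain ⟨l, rfl⟩ := hg
  exact ⟨l.map fun p => (p.1, p.2 * a⁻¹), (conj_prod a l).symm⟩

lemma agrees_qp {u : List BSym} {w : List (X × Bool)} (h : Agrees u w) :
    QuasiPositive (FreeGroup.mk w) := by
  induction h with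
  | nil => exact FreeGroup.one_eq_mk ▸ qp_one
  | star x => exact ⟨[(x, 1)], by simp [FreeGroup.of]⟩
  | @brack u w x ε h ih =>
      rw [← List.singleton_append, ← FreeGroup.mul_mk, ← FreeGroup.mul_mk]
      have hinv : FreeGroup.mk [(x, !ε)] = (FreeGroup.mk [(x, ε)])⁻¹ := by
        rw [FreeGroup.inv_mk]
        simp [FreeGroup.invRev]
      rw [hinv]
      exact qp_conj _ ih
  | append h₁ h₂ ih₁ ih₂ =>
      rw [← FreeGroup.mul_mk]
      exact qp_mul ih₁ ih₂

lemma qp_rbs [DecidableEq X] :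
    ∀ l : List (X × FreeGroup X), ∃ W : List (X × Bool), RBS W ∧
      FreeGroup.mk W = (l.map fun p => p.2⁻¹ * FreeGroup.of p.1 * p.2).prod := by
  intro l
  induction l with
  | nil => exact ⟨[], .nil, by simp [← FreeGroup.one_eq_mk]⟩
  | cons p t ih =>
      obtain ⟨W, hW, hmk⟩ := ih
      set c := p.2.toWord with hc
      refine ⟨(FreeGroup.invRev c ++ [(p.1, true)] ++ c) ++ W, ?_, ?_⟩
      · exact (rbs_conj c (RBS.star p.1 RBS.nil)).append hW
      · rw [← FreeGroup.mul_mk, ← FreeGroup.mul_mk, ← FreeGroup.mul_mk]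
        have h1 : FreeGroup.mk (FreeGroup.invRev c) = p.2⁻¹ := by
          rw [← FreeGroup.inv_mk, hc, FreeGroup.mk_toWord]
        have h2 : FreeGroup.mk c = p.2 := by rw [hc, FreeGroup.mk_toWord]
        have h3 : FreeGroup.mk [(p.1, true)] = FreeGroup.of p.1 := rfl
        rw [h1, h2, h3, hmk]
        simp

end OrevkovAux

open OrevkovAux in
/-- Orevkov's theorem: a word represents a quasi-positive element of the free
group if and only if some regular bracket structure of the same length agrees
with it. -/
theorem orevkov_rbs_characterization {X : Type*} (w : List (X × Bool)) :
    QuasiPositive (FreeGroup.mk w) ↔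
      ∃ u : List BSym, u.length = w.length ∧ Agrees u w := by
  constructor
  · intro h
    classical
    obtain ⟨l, hl⟩ := h
    obtain ⟨W, hW, hmk⟩ := qp_rbs l
    have heq : FreeGroup.mk W = FreeGroup.mk w := by rw [hmk, ← hl]
    obtain ⟨c, h1, h2⟩ := FreeGroup.Red.exact.1 heq
    have hw : RBS w := (rbs_of_red h2).2 ((rbs_of_red h1).1 hW)
    obtain ⟨u, hu⟩ := rbs_agrees hw
    exact ⟨u, agrees_length hu, hu⟩
  · rintro ⟨u, -, hu⟩
    exact agrees_qp hu
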